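/- arXiv:1012.4283 — 3 statements merged into one kernel-verified Lean document; each statement's English description precedes it below -/
import Mathlib

section
/- A smooth function F on ℂ satisfies (∂/∂z̄)^n F = 0 if and only if F can be written as F(z) = ∑_{k=0}^{n-1} z̄^k φ_k(z) where each φ_k is an entire (holomorphic) function on ℂ. -/
open ComplexConjugate

noncomputable section

/-- The Wirtinger derivative ∂/∂z̄ = (1/2)(∂/∂x + i ∂/∂ξ). -/
def wirtinger (F : ℂ → ℂ) (z : ℂ) : ℂ :=
  (fderiv ℝ F z 1 + Complex.I * fderiv ℝ F z Complex.I) / 2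

open Complex ContDiff

lemma wirtinger_of_hasFDerivAt {f : ℂ → ℂ} {L : ℂ →L[ℝ] ℂ} {z : ℂ}
    (h : HasFDerivAt f L z) : wirtinger f z = (L 1 + I * L I) / 2 := by
  unfold wirtinger; rw [h.fderiv]

lemma wirtinger_eq_zero {f : ℂ → ℂ} {z : ℂ}
    (h : DifferentiableAt ℂ f z) : wirtinger f z = 0 := by
  have hL : HasFDerivAt f ((fderiv ℂ f z).restrictScalars ℝ) z :=
    (h.hasFDerivAt).restrictScalars ℝ
  rw [wirtinger_of_hasFDerivAt hL]
  have h2 : fderiv ℂ f z I = I * fderiv ℂ f z 1 := by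
    have := (fderiv ℂ f z).map_smul I (1 : ℂ)
    simpa [smul_eq_mul] using this
  simp only [ContinuousLinearMap.coe_restrictScalars', h2]
  rw [← mul_assoc, I_mul_I]
  ring

lemma differentiableAt_of_wirtinger {f : ℂ → ℂ} {z : ℂ}
    (hd : DifferentiableAt ℝ f z) (hw : wirtinger f z = 0) : DifferentiableAt ℂ f z := by
  rw [differentiableAt_iff_restrictScalars ℝ hd]
  set L := fderiv ℝ f z with hLdef
  have hw' : (L 1 + I * L I) / 2 = 0 := hw
  have h1 : L 1 = -(I * L I) := by
    field_simp at hw'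
    linear_combination hw'
  have hI : L I = I * L 1 := by
    rw [h1, mul_neg, ← mul_assoc, I_mul_I]; ring
  refine ⟨(L 1) • (ContinuousLinearMap.id ℂ ℂ), ?_⟩
  ext w
  have hkey : L w = L 1 * w := by
    have hrep : L w = ↑w.re * L 1 + ↑w.im * (I * L 1) := by
      conv_lhs => rw [show w = (w.re : ℝ) • (1 : ℂ) + (w.im : ℝ) • I by
        simp [Complex.real_smul, Complex.re_add_im]]
      rw [map_add, map_smul, map_smul, hI]
      simp [Complex.real_smul]
    rw [hrep]
    conv_rhs => rw [← Complex.re_add_im w]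
    push_cast
    ring
  simp [hkey, mul_comm]

lemma wirtinger_sub {f g : ℂ → ℂ} {z : ℂ}
    (hf : DifferentiableAt ℝ f z) (hg : DifferentiableAt ℝ g z) :
    wirtinger (fun z => f z - g z) z = wirtinger f z - wirtinger g z := by
  rw [wirtinger_of_hasFDerivAt (hf.hasFDerivAt.fun_sub hg.hasFDerivAt)]
  simp only [wirtinger, ContinuousLinearMap.sub_apply]
  ring

lemma wirtinger_sum {m : ℕ} (c : Fin m → ℂ → ℂ) (z : ℂ)
    (hc : ∀ k, DifferentiableAt ℝ (c k) z) :
    wirtinger (fun z => ∑ k : Fin m, c k z) z = ∑ k : Fin m, wirtinger (c k) z := by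
  have h : HasFDerivAt (fun z => ∑ k : Fin m, c k z)
      (∑ k : Fin m, fderiv ℝ (c k) z) z := by
    exact HasFDerivAt.fun_sum (fun k _ => (hc k).hasFDerivAt)
  rw [wirtinger_of_hasFDerivAt h]
  simp only [wirtinger, ContinuousLinearMap.sum_apply, Finset.mul_sum,
    ← Finset.sum_add_distrib, Finset.sum_div]

lemma wirtinger_mul {f g : ℂ → ℂ} {z : ℂ}
    (hf : DifferentiableAt ℝ f z) (hg : DifferentiableAt ℝ g z) :
    wirtinger (fun z => f z * g z) z = wirtinger f z * g z + f z * wirtinger g z := by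
  rw [wirtinger_of_hasFDerivAt (hf.hasFDerivAt.fun_mul' hg.hasFDerivAt)]
  simp only [wirtinger, ContinuousLinearMap.add_apply, ContinuousLinearMap.smul_apply,
    ContinuousLinearMap.smulRight_apply, smul_eq_mul, op_smul_eq_mul]
  ring

lemma differentiable_conj' : Differentiable ℝ (fun z : ℂ => (conj z : ℂ)) := by
  have : ⇑Complex.conjCLE = (fun z : ℂ => (conj z : ℂ)) := funext fun z => Complex.conjCLE_apply z
  rw [← this]
  exact Complex.conjCLE.differentiable

lemma wirtinger_conj (z : ℂ) : wirtinger (fun z : ℂ => (conj z : ℂ)) z = 1 := by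
  have h : HasFDerivAt (fun z : ℂ => (conj z : ℂ))
      (Complex.conjCLE : ℂ →L[ℝ] ℂ) z := by
    have : ⇑Complex.conjCLE = (fun z : ℂ => (conj z : ℂ)) := funext fun z => Complex.conjCLE_apply z
    rw [← this]
    exact Complex.conjCLE.hasFDerivAt
  rw [wirtinger_of_hasFDerivAt h]
  simp only [ContinuousLinearEquiv.coe_coe, Complex.conjCLE_apply, map_one, Complex.conj_I,
    mul_neg, I_mul_I, neg_neg]
  norm_num

lemma wirtinger_conj_pow (k : ℕ) (z : ℂ) :
    wirtinger (fun z : ℂ => (conj z) ^ (k + 1)) z = (k + 1) * (conj z) ^ k := by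
  induction k with
  | zero => simpa using wirtinger_conj z
  | succ k ih =>
    have heq : (fun z : ℂ => (conj z) ^ (k + 2)) =
        fun z : ℂ => (conj z) ^ (k + 1) * conj z := by ext w; ring
    rw [heq, wirtinger_mul ((differentiable_conj'.fun_pow (k+1)) z) (differentiable_conj' z),
      ih, wirtinger_conj]
    push_cast
    ring

lemma wirtinger_monomial (k : ℕ) {φ : ℂ → ℂ} (hφ : Differentiable ℂ φ) (z : ℂ) :
    wirtinger (fun z => (conj z) ^ (k + 1) * φ z) z = (k + 1) * ((conj z) ^ k * φ z) := by
  rw [wirtinger_mul ((differentiable_conj'.fun_pow (k+1)) z) (((hφ z).restrictScalars ℝ)),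
    wirtinger_conj_pow, wirtinger_eq_zero (hφ z)]
  ring

lemma diff_monomial (k : ℕ) {φ : ℂ → ℂ} (hφ : Differentiable ℂ φ) :
    Differentiable ℝ (fun z : ℂ => (conj z) ^ k * φ z) :=
  (differentiable_conj'.pow k).mul (hφ.restrictScalars ℝ)

lemma wirtinger_poly {m : ℕ} (φ : Fin (m + 1) → ℂ → ℂ) (hφ : ∀ k, Differentiable ℂ (φ k)) :
    wirtinger (fun z => ∑ k : Fin (m + 1), (conj z) ^ (k : ℕ) * φ k z) =
      fun z => ∑ j : Fin m, (conj z) ^ (j : ℕ) * (((j : ℕ) + 1) * φ j.succ z) := by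
  funext z
  rw [wirtinger_sum _ z (fun k => diff_monomial (k : ℕ) (hφ k) z)]
  rw [Fin.sum_univ_succ]
  have h0 : wirtinger (fun z : ℂ => (conj z) ^ ((0 : Fin (m+1)) : ℕ) * φ 0 z) z = 0 := by
    simp only [Fin.val_zero, pow_zero, one_mul]
    exact wirtinger_eq_zero (hφ 0 z)
  rw [h0, zero_add]
  refine Finset.sum_congr rfl fun j _ => ?_
  have : wirtinger (fun z : ℂ => (conj z) ^ ((j.succ : Fin (m+1)) : ℕ) * φ j.succ z) z
      = ((j : ℕ) + 1) * ((conj z) ^ (j : ℕ) * φ j.succ z) := by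
    simp only [Fin.val_succ]
    exact wirtinger_monomial (j : ℕ) (hφ j.succ) z
  rw [this]; ring

lemma iter_wirtinger_poly : ∀ (m : ℕ) (φ : Fin m → ℂ → ℂ), (∀ k, Differentiable ℂ (φ k)) →
    ∀ z : ℂ, (wirtinger^[m] (fun z => ∑ k : Fin m, (conj z) ^ (k : ℕ) * φ k z)) z = 0 := by
  intro m
  induction m with
  | zero => intro φ _ z; simp
  | succ m ih =>
    intro φ hφ z
    rw [Function.iterate_succ_apply, wirtinger_poly φ hφ]
    exact ih (fun j z => ((j : ℕ) + 1) * φ j.succ z) (fun j => (hφ j.succ).const_mul _) z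

lemma contDiff_wirtinger {F : ℂ → ℂ} (hF : ContDiff ℝ ∞ F) : ContDiff ℝ ∞ (wirtinger F) := by
  obtain ⟨hd, hf⟩ := contDiff_infty_iff_fderiv.mp hF
  exact ((hf.clm_apply contDiff_const).add
    (contDiff_const.mul (hf.clm_apply contDiff_const))).div_const 2

lemma forward : ∀ (n : ℕ) (F : ℂ → ℂ), ContDiff ℝ ∞ F →
    (∀ z : ℂ, (wirtinger^[n] F) z = 0) →
    ∃ φ : Fin n → ℂ → ℂ, (∀ k, Differentiable ℂ (φ k)) ∧
      ∀ z : ℂ, F z = ∑ k : Fin n, (conj z) ^ (k : ℕ) * φ k z := by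
  intro n
  induction n with
  | zero =>
    intro F _ h
    exact ⟨Fin.elim0, fun k => k.elim0, fun z => by simpa using h z⟩
  | succ n ih =>
    intro F hF h
    obtain ⟨φ, hφ, hrep⟩ := ih (wirtinger F) (contDiff_wirtinger hF)
      (fun z => by rw [← Function.iterate_succ_apply]; exact h z)
    set G : ℂ → ℂ :=
      fun z => ∑ k : Fin n, (conj z) ^ ((k : ℕ) + 1) * ((((k : ℕ) + 1 : ℂ))⁻¹ * φ k z)
      with hGdef
    have hGdiff : Differentiable ℝ G := by
      apply Differentiable.fun_sum
      intro k _
      exact diff_monomial _ ((hφ k).const_mul _)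
    have hwG : ∀ z, wirtinger G z = wirtinger F z := by
      intro z
      rw [hGdef, wirtinger_sum _ z (fun k => diff_monomial _ ((hφ k).const_mul _) z), hrep z]
      refine Finset.sum_congr rfl fun k _ => ?_
      rw [wirtinger_monomial (k : ℕ) ((hφ k).const_mul _) z]
      have hne : ((k : ℕ) + 1 : ℂ) ≠ 0 := Nat.cast_add_one_ne_zero (k : ℕ)
      field_simp
    have hFd : Differentiable ℝ F := hF.differentiable (by simp)
    have hH : Differentiable ℂ (fun z => F z - G z) := by
      intro z
      refine differentiableAt_of_wirtinger ((hFd z).sub (hGdiff z)) ?_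
      rw [wirtinger_sub (hFd z) (hGdiff z), hwG z, sub_self]
    refine ⟨Fin.cases (fun z => F z - G z) (fun j z => (((j : ℕ) + 1 : ℂ))⁻¹ * φ j z), ?_, ?_⟩
    · intro k
      refine Fin.cases ?_ (fun j => (hφ j).const_mul _) k
      exact hH
    · intro z
      rw [Fin.sum_univ_succ]
      simp only [Fin.cases_zero, Fin.cases_succ, Fin.val_zero, Fin.val_succ, pow_zero, one_mul]
      rw [hGdef]
      ring

/-- A smooth function `F` on `ℂ` satisfies `(∂/∂z̄)^n F = 0` iff it is a polynomial of
degree `< n` in `z̄` with entire coefficient functions. -/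
theorem polyanalytic_iff (n : ℕ) (F : ℂ → ℂ) (hF : ContDiff ℝ (⊤ : ℕ∞) F) :
    (∀ z : ℂ, (wirtinger^[n] F) z = 0) ↔
      ∃ φ : Fin n → ℂ → ℂ, (∀ k, Differentiable ℂ (φ k)) ∧
        ∀ z : ℂ, F z = ∑ k : Fin n, (conj z) ^ (k : ℕ) * φ k z := by
  constructor
  · exact fun h => forward n F (hF.of_le (by simp)) h
  · rintro ⟨φ, hφ, hrep⟩ z
    have hFeq : F = fun z => ∑ k : Fin n, (conj z) ^ (k : ℕ) * φ k z := funext hrep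
    rw [hFeq]
    exact iter_wirtinger_poly n φ hφ z
end
end

section
/- The reproducing kernel of the true polyanalytic Fock space of order n+1 admits the explicit expansion K^n(w,z) = (1/n!) e^{π|w|²} (d/dw)^n [ e^{π z̄ w − π|w|²} (w−z)^n ] = ∑_{k=0}^n binom(n,k) (1/k!) (−π|w−z|²)^k e^{π z̄ w}. -/
/-!
Write `a = π z̄` and `b = -π w̄`. The operator `∑ₖ C(n,k) bᵏ ∂ⁿ⁻ᵏ` is `e^{-bu} ∂ⁿ e^{bu}` by the
Leibniz rule, so the left-hand side is `(1/n!) e^{-bw} ∂ⁿ[e^{(a+b)u} (u - z)ⁿ](w)`. Expanding this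
derivative by the Leibniz rule once more, `∂ⁿ⁻ᵏ (u - z)ⁿ = (n!/k!) (u - z)ᵏ` and
`(a + b)(w - z) = -π|w - z|²` give the right-hand side term by term.
-/

open ComplexConjugate

noncomputable section

theorem iteratedDeriv_cexp_const_mul_mul {f : ℂ → ℂ} {m : ℕ} {w : ℂ} (b : ℂ)
    (hf : ContDiffAt ℂ m f w) :
    iteratedDeriv m (fun u => Complex.exp (b * u) * f u) w =
      Complex.exp (b * w) *
        ∑ k ∈ Finset.range (m + 1), (m.choose k : ℂ) * b ^ k * iteratedDeriv (m - k) f w := by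
  have hexp : ContDiffAt ℂ m (fun u => Complex.exp (b * u)) w := by fun_prop
  rw [iteratedDeriv_fun_mul hexp hf, Finset.mul_sum]
  refine Finset.sum_congr rfl fun k _ => ?_
  rw [iteratedDeriv_cexp_const_mul]
  ring

theorem iteratedDeriv_sub_const_pow {𝕜 : Type*} [NontriviallyNormedField 𝕜] (n j : ℕ) (z w : 𝕜) :
    iteratedDeriv j (fun u => (u - z) ^ n) w = n.descFactorial j * (w - z) ^ (n - j) := by
  rw [iteratedDeriv_comp_sub_const j (· ^ n) z]
  exact iteratedDeriv_pow n j

theorem Nat.descFactorial_sub_mul_factorial {n k : ℕ} (hk : k ≤ n) :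
    n.descFactorial (n - k) * k.factorial = n.factorial := by
  simpa [Nat.sub_sub_self hk, mul_comm] using Nat.factorial_mul_descFactorial (Nat.sub_le n k)

/-- Explicit expansion of the reproducing kernel of the true polyanalytic Fock space:
`(1/n!) e^{π|w|²}(d/dw)^n[e^{π z̄ w - π|w|²}(w-z)^n]
  = ∑_{k=0}^n C(n,k)(1/k!)(-π|w-z|²)^k e^{π z̄ w}`,
where the left-hand side is interpreted via the Leibniz rule treating `w̄` as constant. -/
theorem polyFock_kernel_expansion (n : ℕ) (w z : ℂ) :
    (1 / (n.factorial : ℂ)) *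
      ∑ k ∈ Finset.range (n + 1), (n.choose k : ℂ) * (-Real.pi * conj w) ^ k *
        iteratedDeriv (n - k)
          (fun u => Complex.exp (Real.pi * conj z * u) * (u - z) ^ n) w =
    ∑ k ∈ Finset.range (n + 1), (n.choose k : ℂ) * (1 / (k.factorial : ℂ)) *
      (-Real.pi * Complex.normSq (w - z)) ^ k *
      Complex.exp (Real.pi * conj z * w) := by
  set a : ℂ := Real.pi * conj z
  set b : ℂ := -Real.pi * conj w
  have hab : (a + b) * (w - z) = -Real.pi * Complex.normSq (w - z) := by
    rw [Complex.normSq_eq_conj_mul_self, map_sub]; ring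
  have hconj := iteratedDeriv_cexp_const_mul_mul b
    (f := fun u => Complex.exp (a * u) * (u - z) ^ n) (m := n) (w := w) (by fun_prop)
  simp only [← mul_assoc, ← Complex.exp_add, ← add_mul] at hconj
  rw [iteratedDeriv_cexp_const_mul_mul (b + a) (by fun_prop)] at hconj
  have hsum : ∑ k ∈ Finset.range (n + 1), (n.choose k : ℂ) * b ^ k *
        iteratedDeriv (n - k) (fun u => Complex.exp (a * u) * (u - z) ^ n) w =
      Complex.exp (a * w) * ∑ k ∈ Finset.range (n + 1),
        (n.choose k : ℂ) * (b + a) ^ k * iteratedDeriv (n - k) (fun u => (u - z) ^ n) w := by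
    apply mul_left_cancel₀ (Complex.exp_ne_zero (b * w))
    rw [← hconj, ← mul_assoc, ← Complex.exp_add, add_mul]
  rw [hsum, Finset.mul_sum, Finset.mul_sum]
  refine Finset.sum_congr rfl fun k hk => ?_
  have hkn : k ≤ n := Finset.mem_range_succ_iff.mp hk
  have hfac : (n.descFactorial (n - k) : ℂ) * k.factorial = n.factorial := by
    exact_mod_cast Nat.descFactorial_sub_mul_factorial hkn
  have hdesc : (n.descFactorial (n - k) : ℂ) ≠ 0 :=
    left_ne_zero_of_mul (hfac ▸ Nat.cast_ne_zero.mpr n.factorial_ne_zero)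
  rw [iteratedDeriv_sub_const_pow, Nat.sub_sub_self hkn, ← hab, mul_pow, add_comm b a,
    ← hfac]
  field_simp
end
end

section
/- Let Λ ⊂ ℂ be a lattice and σ_Λ its modified Weierstrass sigma function (vanishing simply exactly on Λ). Define S_Λ^n(z) = e^{π|z|²} (d/dz)^n [ e^{−π|z|²} σ_Λ(z)^{n+1}/(n! z) ], interpreted via the Leibniz expansion S_Λ^n(z) = ∑_{k=0}^n binom(n,k)(−π z̄)^k (d/dz)^{n−k} ( σ_Λ(z)^{n+1}/(n! z) ). Then S_Λ^n interpolates the delta sequence on Λ: S_Λ^n(λ) = 1 if λ = 0 and S_Λ^n(λ) = 0 for all λ ∈ Λ \ {0}. -/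
/-!
At a lattice point `λ ≠ 0` the factor `z` is a unit near `λ`, so `G` vanishes at `λ` to order at
least that of `σ^{n+1}`, namely `n + 1`; every term of the Leibniz sum involves a derivative of `G`
of order at most `n` at `λ`. At `λ = 0` the factor `conj λ` kills all terms but the first, and
writing `σ(z) = z h(z)` with `h` entire gives `G = z^n h^{n+1}` (by continuity at `0`), so
`G^{(n)}(0) = n! h(0)^{n+1} = n! σ'(0)^{n+1} = n!`.
-/

open ComplexConjugate
open scoped Nat

lemma exists_differentiable_eq_sub_mul {f : ℂ → ℂ} (hf : Differentiable ℂ f) {a : ℂ}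
    (ha : f a = 0) :
    ∃ h : ℂ → ℂ, Differentiable ℂ h ∧ h a = deriv f a ∧ ∀ z, f z = (z - a) * h z :=
  ⟨dslope f a, differentiableOn_univ.mp
      ((Complex.differentiableOn_dslope Filter.univ_mem).mpr hf.differentiableOn),
    dslope_same f a, fun z => by simpa [ha] using (sub_smul_dslope f a z).symm⟩

lemma iteratedDeriv_eq_zero_of_mul_id_eq_pow {𝕜 : Type*} [NontriviallyNormedField 𝕜]
    [CharZero 𝕜] [CompleteSpace 𝕜] {f g : 𝕜 → 𝕜} {a : 𝕜} {N : ℕ} (hf : AnalyticAt 𝕜 f a)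
    (hg : AnalyticAt 𝕜 g a) (hga : g a = 0) (ha : a ≠ 0) (hfg : ∀ z, f z * z = g z ^ N)
    {i : ℕ} (hi : i < N) :
    iteratedDeriv i f a = 0 := by
  refine (natCast_le_analyticOrderAt_iff_iteratedDeriv_eq_zero hf).mp ?_ i hi
  have hid : analyticOrderAt id a = 0 := analyticOrderAt_eq_zero.2 (.inr ha)
  have hg1 : 1 ≤ analyticOrderAt g a :=
    Order.one_le_iff_ne_zero.mpr (hg.analyticOrderAt_ne_zero.mpr hga)
  calc (N : ℕ∞) = N • 1 := by simp
    _ ≤ N • analyticOrderAt g a := nsmul_le_nsmul_right hg1 N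
    _ = analyticOrderAt (f * id) a := by
      rw [← analyticOrderAt_pow hg, show f * id = g ^ N from funext hfg]
    _ = analyticOrderAt f a := by rw [analyticOrderAt_mul hf analyticAt_id, hid, add_zero]

lemma iteratedDeriv_zero_eq_factorial_mul_of_mul_id_eq_pow {f g : ℂ → ℂ} (hf : Continuous f)
    (hg : Differentiable ℂ g) (hg0 : g 0 = 0) (n : ℕ) (hfg : ∀ z, f z * z = g z ^ (n + 1)) :
    iteratedDeriv n f 0 = n ! * deriv g 0 ^ (n + 1) := by
  obtain ⟨h, hh, hh0, hgh⟩ := exists_differentiable_eq_sub_mul hg hg0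
  have hh_cont := hh.continuous
  -- written as `(z - 0) ^ (n + 0)` to match `iteratedDeriv_mul_pow_sub_of_analytic`
  have hfh : ∀ z, f z = (z - 0) ^ (n + 0) * h z ^ (n + 1) := by
    refine congrFun (hf.ext_on (dense_compl_singleton 0) (by fun_prop) fun z hz => ?_)
    apply mul_right_cancel₀ (show z ≠ 0 from hz)
    rw [hfg, hgh]
    ring
  obtain ⟨R, -, hR⟩ :=
    iteratedDeriv_mul_pow_sub_of_analytic (fun z => (hh.pow (n + 1)).analyticAt z) hfh
  simp [hR, hh0]

theorem sigma_interpolates_general (n : ℕ) (l₁ l₂ : ℂ)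
    (σ : ℂ → ℂ) (hσ : Differentiable ℂ σ)
    (hzero : ∀ z : ℂ, σ z = 0 ↔ ∃ m₁ m₂ : ℤ, z = m₁ * l₁ + m₂ * l₂)
    (hderiv0 : deriv σ 0 = 1)
    (G : ℂ → ℂ) (hG : Differentiable ℂ G) (hGσ : ∀ z : ℂ, G z * z = σ z ^ (n + 1)) :
    ∀ lam : ℂ, (∃ m₁ m₂ : ℤ, lam = m₁ * l₁ + m₂ * l₂) →
      (∑ k ∈ Finset.range (n + 1), (n.choose k : ℂ) * (-Real.pi * conj lam) ^ k *
          iteratedDeriv (n - k) (fun z => G z / (n.factorial : ℂ)) lam)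
        = if lam = 0 then 1 else 0 := by
  intro lam hlam
  have hσlam : σ lam = 0 := (hzero lam).mpr hlam
  simp only [iteratedDeriv_div_const]
  split_ifs with hlam0
  · subst hlam0
    rw [Finset.sum_eq_single_of_mem 0 (by simp) fun k _ hk => by simp [zero_pow hk], Nat.sub_zero,
      iteratedDeriv_zero_eq_factorial_mul_of_mul_id_eq_pow hG.continuous hσ hσlam n hGσ]
    simp [hderiv0, Nat.factorial_ne_zero]
  · refine Finset.sum_eq_zero fun k hk => ?_
    rw [iteratedDeriv_eq_zero_of_mul_id_eq_pow (hG.analyticAt lam) (hσ.analyticAt lam) hσlam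
      hlam0 hGσ (by omega), zero_div, mul_zero]

/-- Let `σ_Λ` be the modified Weierstrass sigma function of the lattice `Λ = ℤλ₁ + ℤλ₂`
(vanishing simply exactly on `Λ`, with `σ_Λ'(0) = 1`), and let `G` be the entire function
with `G(z)·z = σ_Λ(z)^{n+1}`. Then
`S_Λ^n(z) = ∑_{k=0}^n C(n,k)(-π z̄)^k (d/dz)^{n-k}(σ_Λ^{n+1}/(n! z))` satisfies
`S_Λ^n(0) = 1` and `S_Λ^n(λ) = 0` for `λ ∈ Λ \ {0}`. -/
theorem sigma_interpolates (n : ℕ) (l₁ l₂ : ℂ) (hind : LinearIndependent ℝ ![l₁, l₂])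
    (σ : ℂ → ℂ) (hσ : Differentiable ℂ σ)
    (hzero : ∀ z : ℂ, σ z = 0 ↔ ∃ m₁ m₂ : ℤ, z = m₁ * l₁ + m₂ * l₂)
    (hsimple : ∀ z : ℂ, σ z = 0 → deriv σ z ≠ 0)
    (hderiv0 : deriv σ 0 = 1)
    (G : ℂ → ℂ) (hG : Differentiable ℂ G) (hGσ : ∀ z : ℂ, G z * z = σ z ^ (n + 1)) :
    ∀ lam : ℂ, (∃ m₁ m₂ : ℤ, lam = m₁ * l₁ + m₂ * l₂) →
      (∑ k ∈ Finset.range (n + 1), (n.choose k : ℂ) * (-Real.pi * conj lam) ^ k *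
          iteratedDeriv (n - k) (fun z => G z / (n.factorial : ℂ)) lam)
        = if lam = 0 then 1 else 0 :=
  sigma_interpolates_general n l₁ l₂ σ hσ hzero hderiv0 G hG hGσ
end
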